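/- Let a = 2cos(π/7), so that a³ = a² + 2a − 1, and let β = a² + a. Then the 2 × 2 matrix [[1, a], [a, a² + 1]] has β as an eigenvalue with eigenvector (1, a² − 1), its other eigenvalue is 2 − a, and (2 − a) = β⁻¹; moreover β is a Pisot number whose minimal polynomial over ℚ is x³ − 6x² + 5x − 1. -/

import Mathlib

open Polynomial

/-- A Pisot number: a real algebraic integer `β > 1` all of whose Galois conjugates
(the other complex roots of its minimal polynomial over `ℚ`) have modulus `< 1`. -/
def IsPisot (β : ℝ) : Prop :=
  1 < β ∧ IsIntegral ℤ β ∧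
    ∀ z : ℂ, z ≠ (β : ℂ) → Polynomial.aeval z (minpoly ℚ β) = 0 → ‖z‖ < 1

/-- `a = 2 cos (π/7)`. -/
noncomputable def a7 : ℝ := 2 * Real.cos (Real.pi / 7)

/-- `β = a² + a`. -/
noncomputable def b7 : ℝ := a7 ^ 2 + a7

/-- The matrix `[[1, a], [a, a² + 1]]`. -/
noncomputable def M7 : Matrix (Fin 2) (Fin 2) ℝ := !![1, a7; a7, a7 ^ 2 + 1]

/-!
`a = 2 cos (π/7)` is a root of `x³ - x² - 2x + 1`: the identity `cos (4π/7) = -cos (3π/7)` becomes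
a polynomial equation in `cos (π/7)` by the double- and triple-angle formulas. All algebraic claims
about `a`, the matrix and `β = a² + a` are identities modulo this cubic; in particular `β` is a root
of `x³ - 6x² + 5x - 1`. That cubic has no root `±1`, so by the rational root theorem it is
irreducible over `ℚ`. Dividing it by `x - β` leaves the real quadratic `x² + (β - 6)x + β⁻¹`, which
satisfies the Schur–Cohn conditions `|c| < 1`, `|b| < 1 + c` because `5 < β < 6`; hence the
conjugates of `β` lie in the open unit disc.
-/

theorem Complex.norm_lt_one_of_sq_add_mul_add_eq_zero {b c : ℝ} (hc : |c| < 1)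
    (hb : |b| < 1 + c) {z : ℂ} (hz : z ^ 2 + b * z + c = 0) : ‖z‖ < 1 := by
  have hre : z.re ^ 2 - z.im ^ 2 + b * z.re + c = 0 := by
    simpa [sq] using congrArg Complex.re hz
  have him : z.im * (2 * z.re + b) = 0 := by
    have := congrArg Complex.im hz
    simp only [sq, add_im, mul_im, ofReal_re, ofReal_im, zero_mul, add_zero, zero_im] at this
    linear_combination this
  rw [← sq_lt_one_iff₀ (norm_nonneg z), Complex.sq_norm, Complex.normSq_apply]
  obtain ⟨hc₁, hc₂⟩ := abs_lt.mp hc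
  obtain ⟨hb₁, hb₂⟩ := abs_lt.mp hb
  rcases mul_eq_zero.mp him with him | hvertex
  · -- the quadratic is positive at `±1` and monotone outside `[-1, 1]`
    rw [him] at hre ⊢
    by_contra! h
    rcases le_or_gt 1 z.re with h1 | h1
    · nlinarith [mul_nonneg (sub_nonneg.mpr h1) (by linarith : 0 ≤ z.re + 1 + b)]
    · have h1' : z.re ≤ -1 := by nlinarith
      nlinarith [mul_nonneg (by linarith : 0 ≤ -1 - z.re) (by linarith : 0 ≤ 1 - b - z.re)]
  · nlinarith

theorem Polynomial.irreducible_map_of_forall_not_isRoot_intCast {p : ℤ[X]} (hp : p.Monic)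
    (h2 : 2 ≤ p.natDegree) (h3 : p.natDegree ≤ 3) (hroot : ∀ n : ℤ, ¬ p.IsRoot n) :
    Irreducible (p.map (algebraMap ℤ ℚ)) := by
  rw [irreducible_iff_roots_eq_zero_of_degree_le_three (by rwa [hp.natDegree_map])
    (by rwa [hp.natDegree_map])]
  refine Multiset.eq_zero_of_forall_notMem fun r hr => ?_
  rw [mem_roots (hp.map _).ne_zero, IsRoot, eval_map] at hr
  obtain ⟨n, rfl, -⟩ := exists_integer_of_is_root_of_monic (K := ℚ) hp hr
  rw [algebraMap_int_eq, eq_intCast, eval₂_at_intCast, eq_intCast, Int.cast_eq_zero] at hr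
  exact hroot n hr

theorem half_lt_cos_pi_div_seven : 1 / 2 < Real.cos (Real.pi / 7) := by
  rw [← Real.cos_pi_div_three]
  apply Real.cos_lt_cos_of_nonneg_of_le_pi <;> linarith [Real.pi_pos]

theorem cos_pi_div_seven_cubic :
    8 * Real.cos (Real.pi / 7) ^ 3 - 4 * Real.cos (Real.pi / 7) ^ 2
      - 4 * Real.cos (Real.pi / 7) + 1 = 0 := by
  set θ := Real.pi / 7
  have h : Real.cos (2 * (2 * θ)) = -Real.cos (3 * θ) := by
    rw [← Real.cos_pi_sub]; congr 1; ring
  rw [Real.cos_two_mul, Real.cos_two_mul, Real.cos_three_mul] at h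
  have hc : Real.cos θ + 1 ≠ 0 := by linarith [half_lt_cos_pi_div_seven]
  refine (mul_eq_zero.mp ?_).resolve_left hc
  linear_combination h

theorem one_lt_a7 : 1 < a7 := by
  unfold a7; linarith [half_lt_cos_pi_div_seven]

theorem a7_cubic : a7 ^ 3 = a7 ^ 2 + 2 * a7 - 1 := by
  unfold a7; linear_combination cos_pi_div_seven_cubic

theorem two_sub_a7_mul_b7 : (2 - a7) * b7 = 1 := by
  unfold b7; linear_combination -a7_cubic

theorem b7_cubic : b7 ^ 3 = 6 * b7 ^ 2 - 5 * b7 + 1 := by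
  unfold b7; linear_combination (a7 ^ 3 + 4 * a7 ^ 2 + 3 * a7 - 1) * a7_cubic

theorem two_lt_b7 : 2 < b7 := by
  unfold b7; nlinarith [one_lt_a7]

-- `b³ - 6b² + 5b - 1 = (b - 5) b (b - 1) - 1 = b² (b - 6) + 5b - 1` with `b > 2`
theorem b7_mem_Ioo : b7 ∈ Set.Ioo 5 6 := by
  have h := b7_cubic
  have h2 := two_lt_b7
  constructor
  · nlinarith [mul_pos (by linarith : (0 : ℝ) < b7) (by linarith : (0 : ℝ) < b7 - 1)]
  · nlinarith [mul_pos (by linarith : (0 : ℝ) < b7) (by linarith : (0 : ℝ) < b7)]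

theorem M7_mulVec_b7 : M7.mulVec ![1, a7 ^ 2 - 1] = b7 • ![1, a7 ^ 2 - 1] := by
  rw [Matrix.mulVec_fin_two, Matrix.smul_vec2]
  refine Matrix.vec2_eq ?_ ?_ <;>
    simp only [M7, b7, Matrix.of_apply, Matrix.cons_val_zero, Matrix.cons_val_one, smul_eq_mul]
  · linear_combination a7_cubic
  · linear_combination -a7_cubic

theorem M7_mulVec_two_sub_a7 : M7.mulVec ![a7, 1 - a7] = (2 - a7) • ![a7, 1 - a7] := by
  rw [Matrix.mulVec_fin_two, Matrix.smul_vec2]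
  refine Matrix.vec2_eq ?_ ?_ <;>
    simp only [M7, Matrix.of_apply, Matrix.cons_val_zero, Matrix.cons_val_one, smul_eq_mul]
  · ring
  · linear_combination -a7_cubic

noncomputable def b7Poly : ℤ[X] := X ^ 3 - 6 * X ^ 2 + 5 * X - 1

theorem b7Poly_monic : b7Poly.Monic := by unfold b7Poly; monicity!

theorem b7Poly_natDegree : b7Poly.natDegree = 3 := by unfold b7Poly; compute_degree!

theorem aeval_b7Poly {A : Type*} [CommRing A] (x : A) :
    aeval x b7Poly = x ^ 3 - 6 * x ^ 2 + 5 * x - 1 := by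
  simp [b7Poly, map_ofNat]

theorem b7Poly_not_isRoot (n : ℤ) : ¬ b7Poly.IsRoot n := by
  intro h
  have h : n * (n ^ 2 - 6 * n + 5) = 1 := by
    rw [IsRoot, ← coe_aeval_eq_eval, aeval_b7Poly] at h; linear_combination h
  rcases Int.eq_one_or_neg_one_of_mul_eq_one h with rfl | rfl <;> norm_num at h

theorem b7Poly_map : b7Poly.map (algebraMap ℤ ℚ) = X ^ 3 - 6 * X ^ 2 + 5 * X - 1 := by
  simp [b7Poly]

theorem minpoly_b7 : minpoly ℚ b7 = X ^ 3 - 6 * X ^ 2 + 5 * X - 1 := by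
  rw [← b7Poly_map]
  refine (minpoly.eq_of_irreducible_of_monic ?_ ?_ (b7Poly_monic.map _)).symm
  · exact irreducible_map_of_forall_not_isRoot_intCast b7Poly_monic (by simp [b7Poly_natDegree])
      (by simp [b7Poly_natDegree]) b7Poly_not_isRoot
  · rw [aeval_map_algebraMap, aeval_b7Poly]; linear_combination b7_cubic

theorem isIntegral_b7 : IsIntegral ℤ b7 :=
  ⟨b7Poly, b7Poly_monic, by rw [← aeval_def, aeval_b7Poly]; linear_combination b7_cubic⟩

theorem norm_lt_one_of_aeval_minpoly_b7 {z : ℂ} (hz : z ≠ b7)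
    (hroot : aeval z (minpoly ℚ b7) = 0) : ‖z‖ < 1 := by
  obtain ⟨h5, h6⟩ := b7_mem_Ioo
  have hb : (b7 : ℂ) ≠ 0 := by exact_mod_cast (by linarith : b7 ≠ 0)
  have hcubic : (b7 : ℂ) ^ 3 = 6 * b7 ^ 2 - 5 * b7 + 1 := by exact_mod_cast b7_cubic
  rw [minpoly_b7, ← b7Poly_map, aeval_map_algebraMap, aeval_b7Poly] at hroot
  have hquad : z ^ 2 + ((b7 - 6 : ℝ) : ℂ) * z + ((b7⁻¹ : ℝ) : ℂ) = 0 := by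
    refine (mul_eq_zero.mp ?_).resolve_left (sub_ne_zero.mpr hz)
    push_cast
    field_simp
    linear_combination b7 * hroot - z * hcubic
  refine Complex.norm_lt_one_of_sq_add_mul_add_eq_zero ?_ ?_ hquad
  · rw [abs_of_pos (by positivity)]; exact inv_lt_one_of_one_lt₀ (by linarith)
  · rw [abs_of_neg (by linarith)]; linarith [inv_pos.mpr (by linarith : (0 : ℝ) < b7)]

theorem isPisot_b7 : IsPisot b7 :=
  ⟨by linarith [two_lt_b7], isIntegral_b7, fun _ => norm_lt_one_of_aeval_minpoly_b7⟩

theorem stmt_16 :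
    a7 ^ 3 = a7 ^ 2 + 2 * a7 - 1 ∧
    M7.mulVec ![1, a7 ^ 2 - 1] = b7 • ![1, a7 ^ 2 - 1] ∧
    (∃ w : Fin 2 → ℝ, w ≠ 0 ∧ M7.mulVec w = (2 - a7) • w) ∧
    2 - a7 = b7⁻¹ ∧
    IsPisot b7 ∧
    minpoly ℚ b7 = X ^ 3 - 6 * X ^ 2 + 5 * X - 1 := by
  have ha : a7 ≠ 0 := by linarith [one_lt_a7]
  refine ⟨a7_cubic, M7_mulVec_b7, ⟨![a7, 1 - a7], ?_, M7_mulVec_two_sub_a7⟩,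
    eq_inv_of_mul_eq_one_left two_sub_a7_mul_b7, isPisot_b7, minpoly_b7⟩
  exact fun h => ha (by simpa using congrFun h 0)
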